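/- arXiv:2206.01482 — 7 statements merged into one kernel-verified Lean document; each statement's English description precedes it below -/
import Mathlib

section
/- The core matrix M̃ of a Moran process is diagonalizable over ℝ with a simple largest eigenvalue: there exist real numbers μ1 > μ2 ≥ … ≥ μ_{N−1} and two bases (ṽ^{(i)})_{i=1,…,N−1} and (ũ^{(i)})_{i=1,…,N−1} of ℝ^{N−1} such that M̃ ṽ^{(i)} = μ_i ṽ^{(i)} and (ũ^{(i)})ᵀ M̃ = μ_i (ũ^{(i)})ᵀ for every i. -/
/-! The core matrix is tridiagonal with positive off-diagonal entries, so it satisfies detailed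
balance `π i * A i j = π j * A j i` for the positive weights of the associated birth–death chain.
Conjugating by `diagonal √π` therefore makes it symmetric, and the spectral theorem gives real
eigenvalues with an orthonormal eigenbasis, which the diagonal change of basis carries back to
right and left eigenbases of the core matrix. The spectrum is simple: the conjugate still has a
nonzero superdiagonal, so an eigenvector is determined by its first entry and no eigenvalue can
carry two independent eigenvectors. -/

open Finset Matrix Filter

/-- The (N+1)×(N+1) Moran transition matrix (indices 0,…,N) built from a
type selection vector `s`. -/
noncomputable def moranM (N : ℕ) (s : ℕ → ℝ) : Matrix (Fin (N + 1)) (Fin (N + 1)) ℝ :=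
  fun i j =>
    if (i : ℕ) + 1 = (j : ℕ) then ((j : ℕ) : ℝ) / N * (1 - s (j : ℕ))
    else if (i : ℕ) = (j : ℕ) + 1 then ((N : ℝ) - ((j : ℕ) : ℝ)) / N * s (j : ℕ)
    else if (i : ℕ) = (j : ℕ) then
      1 - ((j : ℕ) : ℝ) / N * (1 - s (j : ℕ)) - ((N : ℝ) - ((j : ℕ) : ℝ)) / N * s (j : ℕ)
    else 0

/-- `s` is a type selection vector: `s 0 = 0`, `s N = 1`, `0 < s i < 1` in the interior. -/
def IsTypeSelection (N : ℕ) (s : ℕ → ℝ) : Prop :=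
  s 0 = 0 ∧ s N = 1 ∧ ∀ i : ℕ, 0 < i → i < N → 0 < s i ∧ s i < 1

/-- The core matrix: the (N−1)×(N−1) submatrix of the Moran matrix on states 1,…,N−1. -/
noncomputable def moranCore (N : ℕ) (s : ℕ → ℝ) : Matrix (Fin (N - 1)) (Fin (N - 1)) ℝ :=
  fun i j =>
    moranM N s ⟨(i : ℕ) + 1, by have := i.isLt; omega⟩ ⟨(j : ℕ) + 1, by have := j.isLt; omega⟩

/-- Embedding of core indices {1,…,N−1} into the full index set {0,…,N}. -/
def embIn (N : ℕ) (i : Fin (N - 1)) : Fin (N + 1) :=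
  ⟨(i : ℕ) + 1, by have := i.isLt; omega⟩

namespace Matrix

section Similarity

variable {R : Type*} [CommRing R] {m ι : Type*} [Fintype m] [DecidableEq m]
  {A P Q : Matrix m m R}

theorem mulVec_mulVec_eq_smul_of_conj (hQP : Q * P = 1) {b : m → R} {c : R}
    (h : (P * A * Q) *ᵥ b = c • b) : A *ᵥ (Q *ᵥ b) = c • (Q *ᵥ b) := by
  calc A *ᵥ (Q *ᵥ b) = Q *ᵥ ((P * A * Q) *ᵥ b) := by
        simp only [mulVec_mulVec, ← mul_assoc, hQP, one_mul]
    _ = c • (Q *ᵥ b) := by rw [h, mulVec_smul]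

theorem vecMul_vecMul_eq_smul_of_conj (hQP : Q * P = 1) {b : m → R} {c : R}
    (h : b ᵥ* (P * A * Q) = c • b) : (b ᵥ* P) ᵥ* A = c • (b ᵥ* P) := by
  calc (b ᵥ* P) ᵥ* A = (b ᵥ* (P * A * Q)) ᵥ* P := by
        simp only [vecMul_vecMul, mul_assoc, hQP, mul_one]
    _ = c • (b ᵥ* P) := by rw [h, smul_vecMul]

theorem _root_.LinearIndependent.mulVec_of_mul_eq_one (hPQ : P * Q = 1) {b : ι → m → R}
    (hb : LinearIndependent R b) : LinearIndependent R fun i => Q *ᵥ b i := by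
  refine hb.map' (mulVecLin Q) (LinearMap.ker_eq_bot.mpr fun x y hxy => ?_)
  simpa [mulVec_mulVec, hPQ] using congrArg (P *ᵥ ·) hxy

theorem _root_.LinearIndependent.vecMul_of_mul_eq_one (hPQ : P * Q = 1) {b : ι → m → R}
    (hb : LinearIndependent R b) : LinearIndependent R fun i => b i ᵥ* P := by
  refine hb.map' (vecMulLinear P) (LinearMap.ker_eq_bot.mpr fun x y hxy => ?_)
  simpa [vecMul_vecMul, hPQ] using congrArg (· ᵥ* Q) hxy

end Similarity

theorem isHermitian_diagonal_mul_mul_diagonal_inv {m : Type*} [Fintype m] [DecidableEq m]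
    {A : Matrix m m ℝ} {d : m → ℝ} (hd : ∀ i, d i ≠ 0)
    (h : ∀ i j, d i ^ 2 * A i j = d j ^ 2 * A j i) :
    (diagonal d * A * diagonal d⁻¹).IsHermitian := by
  refine isHermitian_iff_isSymm.mpr (IsSymm.ext fun i j => ?_)
  simp only [diagonal_mul, mul_diagonal, Pi.inv_apply]
  field_simp [hd i, hd j]
  linear_combination h j i

theorem IsHermitian.exists_antitone_eigenvectors {𝕜 : Type*} [RCLike 𝕜] {n : ℕ}
    {S : Matrix (Fin n) (Fin n) 𝕜} (hS : S.IsHermitian) :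
    ∃ (μ : Fin n → ℝ) (b : Fin n → Fin n → 𝕜), Antitone μ ∧ LinearIndependent 𝕜 b ∧
      ∀ i, S *ᵥ b i = (μ i : 𝕜) • b i := by
  have hT := isSymmetric_toEuclideanLin_iff.mpr hS
  refine ⟨hT.eigenvalues finrank_euclideanSpace_fin,
    fun i => WithLp.ofLp (hT.eigenvectorBasis finrank_euclideanSpace_fin i),
    hT.eigenvalues_antitone _, ?_, fun i => congrArg WithLp.ofLp (hT.apply_eigenvectorBasis _ i)⟩
  exact (hT.eigenvectorBasis _).toBasis.linearIndependent.map'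
    (WithLp.linearEquiv 2 𝕜 _).toLinearMap (WithLp.linearEquiv 2 𝕜 _).ker

section Hessenberg

variable {K : Type*} [Field K] {n : ℕ} {S : Matrix (Fin n) (Fin n) K}

/-- The eigenvector equations determine `w` row by row from its first entry, since row `k`
expresses `S k (k+1) * w (k+1)` through `w 0, …, w k`. -/
theorem eq_zero_of_mulVec_eq_smul_of_superdiag_ne_zero
    (hfar : ∀ i j : Fin n, (i : ℕ) + 1 < j → S i j = 0)
    (hsup : ∀ i j : Fin n, (i : ℕ) + 1 = j → S i j ≠ 0)
    {c : K} {w : Fin n → K} (hw : S *ᵥ w = c • w) (h0 : ∀ i : Fin n, (i : ℕ) = 0 → w i = 0) :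
    w = 0 := by
  suffices h : ∀ k : ℕ, ∀ i : Fin n, (i : ℕ) ≤ k → w i = 0 from funext fun i => h i i le_rfl
  intro k
  induction k with
  | zero => exact fun i hi => h0 i (Nat.le_zero.mp hi)
  | succ k ih =>
    intro i hi
    rcases Nat.lt_or_eq_of_le hi with hlt | hik
    · exact ih i (by omega)
    let p : Fin n := ⟨k, by omega⟩
    have hrow : ∑ j, S p j * w j = 0 := by
      simpa [mulVec, dotProduct, ih p le_rfl] using congrFun hw p
    rw [Finset.sum_eq_single i] at hrow
    · exact (mul_eq_zero.mp hrow).resolve_left (hsup p i hik.symm)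
    · intro j _ hji
      rcases le_or_gt (j : ℕ) k with hj | hj
      · rw [ih j hj, mul_zero]
      · rw [hfar p j (by simp only [p]; omega), zero_mul]
    · simp

theorem injective_of_linearIndependent_eigenvectors_of_superdiag_ne_zero {ι : Type*}
    (hfar : ∀ i j : Fin n, (i : ℕ) + 1 < j → S i j = 0)
    (hsup : ∀ i j : Fin n, (i : ℕ) + 1 = j → S i j ≠ 0)
    {b : ι → Fin n → K} (hb : LinearIndependent K b) {c : ι → K}
    (hc : ∀ i, S *ᵥ b i = c i • b i) : Function.Injective c := by
  intro i j hij
  by_contra hne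
  have hn : 0 < n := Nat.pos_of_ne_zero fun hn =>
    hb.ne_zero i (funext fun k => absurd k.isLt (by omega))
  let z : Fin n := ⟨0, hn⟩
  have hfirst {w : Fin n → K} (hw : S *ᵥ w = c i • w) (hwz : w z = 0) : w = 0 :=
    eq_zero_of_mulVec_eq_smul_of_superdiag_ne_zero hfar hsup hw fun k hk => by
      rwa [show k = z from Fin.ext hk]
  -- a combination of `b i` and `b j` killing the first entry is still an eigenvector
  have hcomb : b j z • b i + (-b i z) • b j = 0 := by
    apply hfirst
    · simp only [mulVec_add, mulVec_smul, hc, ← hij]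
      module
    · simp only [Pi.add_apply, Pi.smul_apply, smul_eq_mul]; ring
  obtain ⟨-, hbi⟩ := (LinearIndepOn.pair_iff b hne).mp (hb.linearIndepOn _) _ _ hcomb
  exact hb.ne_zero i (hfirst (hc i) (neg_eq_zero.mp hbi))

end Hessenberg

structure IsPosTridiagonal {n : ℕ} (A : Matrix (Fin n) (Fin n) ℝ) : Prop where
  apply_eq_zero : ∀ i j : Fin n, (i : ℕ) + 1 < j ∨ (j : ℕ) + 1 < i → A i j = 0
  superdiag_pos : ∀ i j : Fin n, (i : ℕ) + 1 = j → 0 < A i j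
  subdiag_pos : ∀ i j : Fin n, (i : ℕ) + 1 = j → 0 < A j i

namespace IsPosTridiagonal

variable {n : ℕ} {A : Matrix (Fin n) (Fin n) ℝ}

/-- The weights are `π k = ∏_{m < k} A m (m+1) / A (m+1) m`, the stationary measure of the
associated birth–death chain. -/
theorem exists_detailed_balance (hA : A.IsPosTridiagonal) :
    ∃ π : Fin n → ℝ, (∀ i, 0 < π i) ∧ ∀ i j, π i * A i j = π j * A j i := by
  let r : ℕ → ℝ := fun k =>
    if h : k + 1 < n then A ⟨k, by omega⟩ ⟨k + 1, h⟩ / A ⟨k + 1, h⟩ ⟨k, by omega⟩ else 1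
  have hr : ∀ k, 0 < r k := fun k => by
    by_cases h : k + 1 < n
    · simp only [r, dif_pos h]
      exact div_pos (hA.superdiag_pos _ _ rfl) (hA.subdiag_pos _ _ rfl)
    · simp [r, dif_neg h]
  let π : ℕ → ℝ := fun k => ∏ m ∈ range k, r m
  have hadj : ∀ i j : Fin n, (i : ℕ) + 1 = j → π i * A i j = π j * A j i := by
    intro i j hij
    have hrij : r i = A i j / A j i := by
      simp only [r, dif_pos (hij ▸ j.isLt : (i : ℕ) + 1 < n)]
      congr
    have := (hA.subdiag_pos i j hij).ne'
    simp only [π, ← hij, prod_range_succ, hrij]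
    field_simp
  refine ⟨fun i => π i, fun i => prod_pos fun k _ => hr k, fun i j => ?_⟩
  by_cases hij : (i : ℕ) + 1 = j
  · exact hadj i j hij
  by_cases hji : (j : ℕ) + 1 = i
  · exact (hadj j i hji).symm
  by_cases heq : i = j
  · rw [heq]
  have hfar : (i : ℕ) + 1 < j ∨ (j : ℕ) + 1 < i := by have := Fin.val_ne_of_ne heq; omega
  simp [hA.apply_eq_zero i j hfar, hA.apply_eq_zero j i hfar.symm]

theorem exists_strictAnti_eigenbases (hA : A.IsPosTridiagonal) :
    ∃ (μ : Fin n → ℝ) (v u : Fin n → Fin n → ℝ), StrictAnti μ ∧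
      LinearIndependent ℝ v ∧ LinearIndependent ℝ u ∧
      (∀ i, A *ᵥ v i = μ i • v i) ∧ ∀ i, u i ᵥ* A = μ i • u i := by
  obtain ⟨π, hπ, hbal⟩ := hA.exists_detailed_balance
  set d : Fin n → ℝ := fun i => √(π i)
  have hd : ∀ i, d i ≠ 0 := fun i => (Real.sqrt_pos.mpr (hπ i)).ne'
  have hPQ : diagonal d * diagonal d⁻¹ = 1 := by
    rw [diagonal_mul_diagonal, ← diagonal_one]
    exact congrArg diagonal (funext fun i => mul_inv_cancel₀ (hd i))
  have hQP : diagonal d⁻¹ * diagonal d = 1 := by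
    rw [diagonal_mul_diagonal, ← diagonal_one]
    exact congrArg diagonal (funext fun i => inv_mul_cancel₀ (hd i))
  set S := diagonal d * A * diagonal d⁻¹
  have hS : S.IsHermitian := isHermitian_diagonal_mul_mul_diagonal_inv hd fun i j => by
    simp only [d, Real.sq_sqrt (hπ _).le, hbal]
  have hSij : ∀ i j, S i j = d i * A i j * (d j)⁻¹ := fun i j => by
    simp [S, diagonal_mul, mul_diagonal]
  obtain ⟨μ, b, hμ, hb, hSb⟩ := hS.exists_antitone_eigenvectors
  have hμinj : Function.Injective μ :=
    injective_of_linearIndependent_eigenvectors_of_superdiag_ne_zero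
      (fun i j hij => by rw [hSij, hA.apply_eq_zero i j (.inl hij)]; ring)
      (fun i j hij => by
        rw [hSij]; exact mul_ne_zero (mul_ne_zero (hd i) (hA.superdiag_pos i j hij).ne')
          (inv_ne_zero (hd j)))
      hb hSb
  refine ⟨μ, fun i => diagonal d⁻¹ *ᵥ b i, fun i => b i ᵥ* diagonal d,
    hμ.strictAnti_of_injective hμinj, hb.mulVec_of_mul_eq_one hPQ, hb.vecMul_of_mul_eq_one hPQ,
    fun i => mulVec_mulVec_eq_smul_of_conj hQP (hSb i),
    fun i => vecMul_vecMul_eq_smul_of_conj hQP ?_⟩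
  rw [← mulVec_transpose, (isHermitian_iff_isSymm.mp hS).eq]
  exact hSb i

end IsPosTridiagonal

end Matrix

theorem moranCore_isPosTridiagonal {N : ℕ} {s : ℕ → ℝ} (hs : IsTypeSelection N s) :
    (moranCore N s).IsPosTridiagonal where
  apply_eq_zero i j hij := by
    simp only [moranCore, moranM]
    rw [if_neg (by omega), if_neg (by omega), if_neg (by omega)]
  superdiag_pos i j hij := by
    have hjN : (j : ℕ) + 1 < N := by omega
    have hs1 := (hs.2.2 ((j : ℕ) + 1) (by omega) hjN).2
    simp only [moranCore, moranM, if_pos (show (i : ℕ) + 1 + 1 = (j : ℕ) + 1 by omega)]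
    push_cast
    exact mul_pos (div_pos (by positivity) (by exact_mod_cast (show 0 < N by omega)))
      (by linarith)
  subdiag_pos i j hij := by
    have hs0 := (hs.2.2 ((i : ℕ) + 1) (by omega) (by omega)).1
    simp only [moranCore, moranM, if_neg (show (j : ℕ) + 1 + 1 ≠ (i : ℕ) + 1 by omega),
      if_pos (show (j : ℕ) + 1 = (i : ℕ) + 1 + 1 by omega)]
    have : ((i : ℕ) : ℝ) + 1 < N := by exact_mod_cast (show (i : ℕ) + 1 < N by omega)
    push_cast
    exact mul_pos (div_pos (by linarith) (by linarith)) hs0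

/-- the Moran core matrix is diagonalizable over ℝ with a simple
largest eigenvalue: there are eigenvalues μ₁ > μ₂ ≥ … ≥ μ_{N−1} and bases of
right and left eigenvectors. -/
theorem moran_core_diagonalizable
    (N : ℕ) (hN : 2 ≤ N) (s : ℕ → ℝ) (hs : IsTypeSelection N s) :
    ∃ (μ : Fin (N - 1) → ℝ) (v u : Fin (N - 1) → (Fin (N - 1) → ℝ)),
      (∀ i j : Fin (N - 1), i ≤ j → μ j ≤ μ i) ∧
      (∀ j : Fin (N - 1), (j : ℕ) ≠ 0 → μ j < μ ⟨0, by omega⟩) ∧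
      LinearIndependent ℝ v ∧ Submodule.span ℝ (Set.range v) = ⊤ ∧
      LinearIndependent ℝ u ∧ Submodule.span ℝ (Set.range u) = ⊤ ∧
      (∀ i, (moranCore N s).mulVec (v i) = μ i • v i) ∧
      (∀ i, (moranCore N s).vecMul (u i) = μ i • u i) := by
  obtain ⟨μ, v, u, hμ, hv, hu, hAv, huA⟩ :=
    (moranCore_isPosTridiagonal hs).exists_strictAnti_eigenbases
  exact ⟨μ, v, u, fun i j hij => hμ.antitone hij, fun j hj => hμ (Nat.pos_of_ne_zero hj),
    hv, hv.span_eq_top_of_card_eq_finrank' (by simp), hu,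
    hu.span_eq_top_of_card_eq_finrank' (by simp), hAv, huA⟩
end

section
/- Microreversibility of the Moran core: let μ be a real eigenvalue of the core matrix M̃, let ũ ∈ ℝ^{N−1} satisfy ũᵀM̃ = μ ũᵀ and ṽ ∈ ℝ^{N−1} satisfy M̃ṽ = μ ṽ. Then for all i, j ∈ {1,…,N−1} one has ũ_i M̃_{ij} ṽ_j = ũ_j M̃_{ji} ṽ_i. -/
open Finset Matrix Filter

lemma tridiag_micro {n : ℕ} (M : Matrix (Fin n) (Fin n) ℝ)
    (hz : ∀ i j : Fin n, (i : ℕ) + 1 ≠ (j : ℕ) → (j : ℕ) + 1 ≠ (i : ℕ) →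
      (i : ℕ) ≠ (j : ℕ) → M i j = 0)
    (μ : ℝ) (ut vt : Fin n → ℝ)
    (huM : M.vecMul ut = μ • ut) (hMv : M.mulVec vt = μ • vt) :
    ∀ i j : Fin n, ut i * M i j * vt j = ut j * M j i * vt i := by
  have balance : ∀ i : Fin n,
      ∑ j, (ut i * M i j * vt j - ut j * M j i * vt i) = 0 := by
    intro i
    have h1 : ∑ j, M i j * vt j = μ * vt i := by
      have := congrFun hMv i
      simpa [Matrix.mulVec, dotProduct, smul_eq_mul] using this
    have h2 : ∑ j, ut j * M j i = μ * ut i := by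
      have := congrFun huM i
      simpa [Matrix.vecMul, dotProduct, smul_eq_mul] using this
    have e1 : ∑ j, ut i * M i j * vt j = ut i * (μ * vt i) := by
      rw [← h1, Finset.mul_sum]
      exact Finset.sum_congr rfl fun j _ => by ring
    have e2 : ∑ j, ut j * M j i * vt i = (μ * ut i) * vt i := by
      rw [← h2, Finset.sum_mul]
    rw [Finset.sum_sub_distrib, e1, e2]; ring
  have hterm : ∀ i x : Fin n, (x : ℕ) ≠ (i : ℕ) + 1 → (i : ℕ) ≠ (x : ℕ) + 1 →
      ut i * M i x * vt x - ut x * M x i * vt i = 0 := by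
    intro i x h1 h2
    by_cases hxi : x = i
    · subst hxi; ring
    · have hxi' : (x : ℕ) ≠ (i : ℕ) := fun h => hxi (Fin.ext h)
      rw [hz i x (by omega) (by omega) (by omega),
        hz x i (by omega) (by omega) (by omega)]
      ring
  have edge : ∀ k : ℕ, ∀ hk : k + 1 < n,
      ut ⟨k, by omega⟩ * M ⟨k, by omega⟩ ⟨k + 1, hk⟩ * vt ⟨k + 1, hk⟩ =
      ut ⟨k + 1, hk⟩ * M ⟨k + 1, hk⟩ ⟨k, by omega⟩ * vt ⟨k, by omega⟩ := by
    intro k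
    induction k with
    | zero =>
      intro hk
      have hb := balance ⟨0, by omega⟩
      rw [← Finset.sum_subset (Finset.subset_univ {(⟨1, hk⟩ : Fin n)})
        (by
          intro x _ hx
          simp only [Finset.mem_singleton] at hx
          have hx1 : (x : ℕ) ≠ 1 := fun h => hx (Fin.ext h)
          exact hterm ⟨0, by omega⟩ x (by simpa using hx1) (by simp))] at hb
      simp only [Finset.sum_singleton] at hb
      linarith
    | succ m ih =>
      intro hk
      have hm : m + 1 < n := by omega
      have hb := balance ⟨m + 1, by omega⟩
      have hne : (⟨m, by omega⟩ : Fin n) ≠ ⟨m + 2, hk⟩ := by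
        exact Fin.ne_of_val_ne (by simp)
      rw [← Finset.sum_subset
        (Finset.subset_univ {(⟨m, by omega⟩ : Fin n), (⟨m + 2, hk⟩ : Fin n)})
        (by
          intro x _ hx
          simp only [Finset.mem_insert, Finset.mem_singleton] at hx
          push_neg at hx
          have hx1 : (x : ℕ) ≠ m := fun h => hx.1 (Fin.ext h)
          have hx2 : (x : ℕ) ≠ m + 2 := fun h => hx.2 (Fin.ext h)
          exact hterm ⟨m + 1, by omega⟩ x (by simp; omega) (by simp; omega))] at hb
      rw [Finset.sum_pair hne] at hb
      have hih := ih hm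
      linarith [hih, hb]
  intro i j
  by_cases hij : (i : ℕ) = (j : ℕ)
  · rw [Fin.ext hij]
  · by_cases h1 : (i : ℕ) + 1 = (j : ℕ)
    · have hk : (i : ℕ) + 1 < n := by rw [h1]; exact j.isLt
      have hj : j = ⟨(i : ℕ) + 1, hk⟩ := Fin.ext h1.symm
      rw [hj]; exact edge (i : ℕ) hk
    · by_cases h2 : (j : ℕ) + 1 = (i : ℕ)
      · have hk : (j : ℕ) + 1 < n := by rw [h2]; exact i.isLt
        have hi : i = ⟨(j : ℕ) + 1, hk⟩ := Fin.ext h2.symm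
        rw [hi]; exact (edge (j : ℕ) hk).symm
      · rw [hz i j h1 h2 hij, hz j i (fun h => h2 h) (fun h => h1 h) (Ne.symm hij)]
        ring

/-- microreversibility of the Moran core: for any real eigenvalue
μ with left eigenvector ũ and right eigenvector ṽ, one has
ũᵢ M̃ᵢⱼ ṽⱼ = ũⱼ M̃ⱼᵢ ṽᵢ. -/
theorem moran_microreversibility
    (N : ℕ) (hN : 2 ≤ N) (s : ℕ → ℝ) (hs : IsTypeSelection N s)
    (μ : ℝ) (ut vt : Fin (N - 1) → ℝ)
    (huM : (moranCore N s).vecMul ut = μ • ut)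
    (hMv : (moranCore N s).mulVec vt = μ • vt) :
    ∀ i j : Fin (N - 1),
      ut i * moranCore N s i j * vt j = ut j * moranCore N s j i * vt i := by
  refine tridiag_micro _ ?_ μ ut vt huM hMv
  intro i j h1 h2 h3
  simp only [moranCore, moranM, Fin.val_mk]
  rw [if_neg (by omega), if_neg (by omega), if_neg (by omega)]
end

section
/- Path-probability ratio for the Moran process: let ũ, ṽ ∈ ℝ^{N−1} be entrywise positive left and right eigenvectors of the core matrix M̃ for its Perron eigenvalue μ1. Let n ≥ 1 and let x : {0,…,n} → {1,…,N−1} be any path with x_0 = i and x_n = j. Then (∏_{k=0}^{n−1} M_{x_{k+1},x_k}) · ũ_j ṽ_i = (∏_{k=0}^{n−1} M_{x_k,x_{k+1}}) · ũ_i ṽ_j; i.e., the ratio of the probability of the forward path to that of the reversed path equals (ũ_i/ṽ_i)/(ũ_j/ṽ_j). -/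
open Finset Matrix Filter

/-- Adjacent-index balance for a tridiagonal matrix with common left/right
eigenvectors. -/
lemma tri_adjacent {m : ℕ} (A : Matrix (Fin m) (Fin m) ℝ)
    (htri : ∀ a b : Fin m, (a : ℕ) + 1 < (b : ℕ) → A a b = 0)
    (htri' : ∀ a b : Fin m, (b : ℕ) + 1 < (a : ℕ) → A a b = 0)
    (μ : ℝ) (u v : Fin m → ℝ)
    (huM : A.vecMul u = μ • u) (hMv : A.mulVec v = μ • v)
    (a b : Fin m) (hab : (b : ℕ) = (a : ℕ) + 1) :
    u a * A a b * v b = u b * A b a * v a := by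
  set j := (a : ℕ) with hj
  have hMv' : ∀ c : Fin m, ∑ d : Fin m, A c d * v d = μ * v c := by
    intro c
    have := congrFun hMv c
    simpa [Matrix.mulVec, dotProduct] using this
  have huM' : ∀ d : Fin m, ∑ c : Fin m, u c * A c d = μ * u d := by
    intro d
    have := congrFun huM d
    simpa [Matrix.vecMul, dotProduct] using this
  set S : Finset (Fin m) := Finset.univ.filter (fun c => (c : ℕ) ≤ j) with hS
  set T : Finset (Fin m) := Finset.univ.filter (fun c => ¬ (c : ℕ) ≤ j) with hT
  have e1 : ∀ c : Fin m, ∑ d : Fin m, u c * A c d * v d = μ * (u c * v c) := by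
    intro c
    have h : ∑ d : Fin m, u c * A c d * v d = u c * ∑ d : Fin m, A c d * v d := by
      rw [Finset.mul_sum]; exact Finset.sum_congr rfl fun d _ => by ring
    rw [h, hMv' c]; ring
  have e2 : ∀ d : Fin m, ∑ c : Fin m, u c * A c d * v d = μ * (u d * v d) := by
    intro d
    have h : ∑ c : Fin m, u c * A c d * v d = (∑ c : Fin m, u c * A c d) * v d := by
      rw [Finset.sum_mul]
    rw [h, huM' d]; ring
  have hdouble : ∑ c ∈ S, ∑ d : Fin m, u c * A c d * v d = ∑ d ∈ S, ∑ c : Fin m, u c * A c d * v d := by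
    calc ∑ c ∈ S, ∑ d : Fin m, u c * A c d * v d = ∑ c ∈ S, μ * (u c * v c) :=
          Finset.sum_congr rfl fun c _ => e1 c
      _ = ∑ d ∈ S, ∑ c : Fin m, u c * A c d * v d :=
          (Finset.sum_congr rfl fun d _ => e2 d).symm
  have hsplit1 : ∀ c : Fin m,
      (∑ d ∈ S, u c * A c d * v d) + (∑ d ∈ T, u c * A c d * v d)
        = ∑ d : Fin m, u c * A c d * v d := by
    intro c
    simpa [hS, hT] using
      Finset.sum_filter_add_sum_filter_not Finset.univ (fun d : Fin m => (d : ℕ) ≤ j)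
        (fun d : Fin m => u c * A c d * v d)
  have hsplit2 : ∀ d : Fin m,
      (∑ c ∈ S, u c * A c d * v d) + (∑ c ∈ T, u c * A c d * v d)
        = ∑ c : Fin m, u c * A c d * v d := by
    intro d
    simpa [hS, hT] using
      Finset.sum_filter_add_sum_filter_not Finset.univ (fun c : Fin m => (c : ℕ) ≤ j)
        (fun c : Fin m => u c * A c d * v d)
  have hcomm : ∑ c ∈ S, ∑ d ∈ S, u c * A c d * v d
      = ∑ d ∈ S, ∑ c ∈ S, u c * A c d * v d := Finset.sum_comm
  have hcross : ∑ c ∈ S, ∑ d ∈ T, u c * A c d * v d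
      = ∑ d ∈ S, ∑ c ∈ T, u c * A c d * v d := by
    have h1 : ∑ c ∈ S, ((∑ d ∈ S, u c * A c d * v d) + (∑ d ∈ T, u c * A c d * v d))
        = ∑ d ∈ S, ((∑ c ∈ S, u c * A c d * v d) + (∑ c ∈ T, u c * A c d * v d)) := by
      rw [Finset.sum_congr rfl fun c _ => hsplit1 c,
        Finset.sum_congr rfl fun d _ => hsplit2 d]
      exact hdouble
    rw [Finset.sum_add_distrib, Finset.sum_add_distrib, hcomm] at h1
    linarith
  have haS : a ∈ S := by simp [hS, hj]
  have hbT : b ∈ T := by simp [hT, hab]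
  have hL : ∑ c ∈ S, ∑ d ∈ T, u c * A c d * v d = u a * A a b * v b := by
    rw [Finset.sum_eq_single_of_mem a haS]
    · rw [Finset.sum_eq_single_of_mem b hbT]
      intro d hd hdb
      have hd' : ¬ (d : ℕ) ≤ j := by simpa [hT] using hd
      have hdb' : (d : ℕ) ≠ (b : ℕ) := fun h => hdb (Fin.ext h)
      have : A a d = 0 := htri a d (by omega)
      simp [this]
    · intro c hc hca
      have hc' : (c : ℕ) ≤ j := by simpa [hS] using hc
      have hca' : (c : ℕ) ≠ (a : ℕ) := fun h => hca (Fin.ext h)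
      refine Finset.sum_eq_zero fun d hd => ?_
      have hd' : ¬ (d : ℕ) ≤ j := by simpa [hT] using hd
      have : A c d = 0 := htri c d (by omega)
      simp [this]
  have hR : ∑ d ∈ S, ∑ c ∈ T, u c * A c d * v d = u b * A b a * v a := by
    rw [Finset.sum_eq_single_of_mem a haS]
    · rw [Finset.sum_eq_single_of_mem b hbT]
      intro c hc hcb
      have hc' : ¬ (c : ℕ) ≤ j := by simpa [hT] using hc
      have hcb' : (c : ℕ) ≠ (b : ℕ) := fun h => hcb (Fin.ext h)
      have : A c a = 0 := htri' c a (by omega)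
      simp [this]
    · intro d hd hda
      have hd' : (d : ℕ) ≤ j := by simpa [hS] using hd
      have hda' : (d : ℕ) ≠ (a : ℕ) := fun h => hda (Fin.ext h)
      refine Finset.sum_eq_zero fun c hc => ?_
      have hc' : ¬ (c : ℕ) ≤ j := by simpa [hT] using hc
      have : A c d = 0 := htri' c d (by omega)
      simp [this]
  rw [hL, hR] at hcross
  exact hcross

/-- Detailed balance for a tridiagonal matrix with common left/right
eigenvectors. -/
lemma tri_balance {m : ℕ} (A : Matrix (Fin m) (Fin m) ℝ)
    (htri : ∀ a b : Fin m, (a : ℕ) + 1 < (b : ℕ) → A a b = 0)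
    (htri' : ∀ a b : Fin m, (b : ℕ) + 1 < (a : ℕ) → A a b = 0)
    (μ : ℝ) (u v : Fin m → ℝ)
    (huM : A.vecMul u = μ • u) (hMv : A.mulVec v = μ • v)
    (a b : Fin m) : A b a * (v a * u b) = A a b * (v b * u a) := by
  by_cases h1 : (a : ℕ) = (b : ℕ)
  · have : a = b := Fin.ext h1
    subst this; ring
  by_cases h2 : (b : ℕ) = (a : ℕ) + 1
  · have h := tri_adjacent A htri htri' μ u v huM hMv a b h2
    linear_combination -h
  by_cases h3 : (a : ℕ) = (b : ℕ) + 1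
  · have h := tri_adjacent A htri htri' μ u v huM hMv b a h3
    linear_combination h
  · have hz1 : A a b = 0 := by
      rcases (by omega : (a : ℕ) + 1 < (b : ℕ) ∨ (b : ℕ) + 1 < (a : ℕ)) with h | h
      · exact htri a b h
      · exact htri' a b h
    have hz2 : A b a = 0 := by
      rcases (by omega : (a : ℕ) + 1 < (b : ℕ) ∨ (b : ℕ) + 1 < (a : ℕ)) with h | h
      · exact htri' b a h
      · exact htri b a h
    rw [hz1, hz2]; ring

lemma moranCore_tri (N : ℕ) (s : ℕ → ℝ) :
    ∀ a b : Fin (N - 1), (a : ℕ) + 1 < (b : ℕ) → moranCore N s a b = 0 := by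
  intro a b h
  simp only [moranCore, moranM]
  rw [if_neg (by omega), if_neg (by omega), if_neg (by omega)]

lemma moranCore_tri' (N : ℕ) (s : ℕ → ℝ) :
    ∀ a b : Fin (N - 1), (b : ℕ) + 1 < (a : ℕ) → moranCore N s a b = 0 := by
  intro a b h
  simp only [moranCore, moranM]
  rw [if_neg (by omega), if_neg (by omega), if_neg (by omega)]

/-- path-probability ratio for the Moran process: for any interior
path x₀ = i, …, xₙ = j, the forward path probability times ũⱼṽᵢ equals the
reversed path probability times ũᵢṽⱼ. -/
theorem moran_path_ratio
    (N : ℕ) (hN : 2 ≤ N) (s : ℕ → ℝ) (hs : IsTypeSelection N s)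
    (μ1 : ℝ) (u v : Fin (N - 1) → ℝ)
    (hu : ∀ i, 0 < u i) (hv : ∀ i, 0 < v i)
    (huM : (moranCore N s).vecMul u = μ1 • u)
    (hMv : (moranCore N s).mulVec v = μ1 • v)
    (n : ℕ) (hn : 1 ≤ n) (x : ℕ → Fin (N - 1)) :
    (∏ k ∈ Finset.range n, moranM N s (embIn N (x (k + 1))) (embIn N (x k)))
        * (u (x n) * v (x 0))
      = (∏ k ∈ Finset.range n, moranM N s (embIn N (x k)) (embIn N (x (k + 1))))
        * (u (x 0) * v (x n)) := by
  have key : ∀ a b : Fin (N - 1),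
      moranCore N s b a * (v a * u b) = moranCore N s a b * (v b * u a) :=
    tri_balance (moranCore N s) (moranCore_tri N s) (moranCore_tri' N s) μ1 u v huM hMv
  have main : ∀ n : ℕ,
      (∏ k ∈ Finset.range n, moranCore N s (x (k + 1)) (x k)) * (u (x n) * v (x 0))
        = (∏ k ∈ Finset.range n, moranCore N s (x k) (x (k + 1))) * (u (x 0) * v (x n)) := by
    intro n
    induction n with
    | zero => simp
    | succ n ih =>
      rw [Finset.prod_range_succ, Finset.prod_range_succ]
      have hne : u (x n) * v (x n) ≠ 0 :=
        ne_of_gt (mul_pos (hu (x n)) (hv (x n)))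
      apply mul_left_cancel₀ hne
      linear_combination
        (moranCore N s (x (n + 1)) (x n) * v (x n) * u (x (n + 1))) * ih
        + ((∏ k ∈ Finset.range n, moranCore N s (x k) (x (k + 1))) * u (x 0) * v (x n))
          * key (x n) (x (n + 1))
  exact main n
end

section
/- Entropy decay for the Moran process: for every probability vector p ∈ Δ^N with ⟨u,p⟩ > 0 and every convex φ : [0,∞) → ℝ with φ(0) = φ(1) = 0, one has E(Mp) ≤ E(p). -/
open Finset Matrix Filter

lemma moranM_nonneg (N : ℕ) (hN : 2 ≤ N) (s : ℕ → ℝ) (hs : IsTypeSelection N s)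
    (a b : Fin (N + 1)) : 0 ≤ moranM N s a b := by
  obtain ⟨h0, h1, hint⟩ := hs
  have hNr : (0:ℝ) < N := by exact_mod_cast (by omega : 0 < N)
  have hbN : (b : ℕ) ≤ N := by have := b.isLt; omega
  have hs0 : 0 ≤ s (b : ℕ) := by
    rcases Nat.eq_zero_or_pos (b:ℕ) with h | h
    · rw [h, h0]
    rcases eq_or_lt_of_le hbN with h' | h'
    · rw [h', h1]; norm_num
    · exact (hint _ h h').1.le
  have hs1 : s (b : ℕ) ≤ 1 := by
    rcases Nat.eq_zero_or_pos (b:ℕ) with h | h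
    · rw [h, h0]; norm_num
    rcases eq_or_lt_of_le hbN with h' | h'
    · rw [h', h1]
    · exact (hint _ h h').2.le
  have hbr : ((b:ℕ):ℝ) ≤ N := by exact_mod_cast hbN
  have hbr0 : (0:ℝ) ≤ ((b:ℕ):ℝ) := Nat.cast_nonneg _
  unfold moranM
  split_ifs with hc1 hc2 hc3
  · exact mul_nonneg (div_nonneg hbr0 hNr.le) (by linarith)
  · exact mul_nonneg (div_nonneg (by linarith) hNr.le) hs0
  · have e1 : ((b:ℕ):ℝ)/N * (1 - s (b:ℕ)) ≤ 1 * (1 - s (b:ℕ)) :=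
      mul_le_mul_of_nonneg_right (by rw [div_le_one hNr]; exact hbr) (by linarith)
    have e2 : ((N:ℝ) - ((b:ℕ):ℝ))/N * s (b:ℕ) ≤ 1 * s (b:ℕ) :=
      mul_le_mul_of_nonneg_right (by rw [div_le_one hNr]; linarith) hs0
    linarith
  · exact le_refl 0

lemma sum_core (N : ℕ) (hN : 2 ≤ N) (f : Fin (N + 1) → ℝ)
    (h0 : f ⟨0, by omega⟩ = 0) (hlast : f ⟨N, by omega⟩ = 0) :
    ∑ j, f j = ∑ j : Fin (N - 1), f (embIn N j) := by
  have hinj : Function.Injective (embIn N) := by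
    intro a b h
    have := congrArg Fin.val h
    simp only [embIn] at this
    exact Fin.ext (by omega)
  rw [show (∑ j : Fin (N-1), f (embIn N j)) = ∑ j ∈ Finset.univ.image (embIn N), f j from
    (Finset.sum_image (fun a _ b _ h => hinj h)).symm]
  symm
  apply Finset.sum_subset (Finset.subset_univ _)
  intro x _ hx
  have hxl := x.isLt
  have hxv : (x:ℕ) = 0 ∨ (x:ℕ) = N := by
    by_contra hc
    push_neg at hc
    exact hx (Finset.mem_image.mpr ⟨⟨(x:ℕ) - 1, by omega⟩, Finset.mem_univ _,
      by simp only [embIn, Fin.ext_iff]; omega⟩)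
  rcases hxv with h | h
  · have : x = ⟨0, by omega⟩ := Fin.ext h
    rw [this, h0]
  · have : x = ⟨N, by omega⟩ := Fin.ext h
    rw [this, hlast]

/-- entropy decay for the Moran process: for any probability
vector p with ⟨u,p⟩ > 0 and any convex φ on [0,∞) with φ(0) = φ(1) = 0,
E(Mp) ≤ E(p). -/
theorem moran_entropy_decay
    (N : ℕ) (hN : 2 ≤ N) (s : ℕ → ℝ) (hs : IsTypeSelection N s)
    (μ1 : ℝ) (u v : Fin (N - 1) → ℝ)
    (hu : ∀ i, 0 < u i) (hv : ∀ i, 0 < v i)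
    (huM : (moranCore N s).vecMul u = μ1 • u)
    (hMv : (moranCore N s).mulVec v = μ1 • v)
    (hvsum : ∑ i, v i = 1) (huv : ∑ i, u i * v i = 1)
    (φ : ℝ → ℝ) (hφ : ConvexOn ℝ (Set.Ici 0) φ) (hφ0 : φ 0 = 0) (hφ1 : φ 1 = 0)
    (p : Fin (N + 1) → ℝ) (hp : ∀ i, 0 ≤ p i) (hpsum : ∑ i, p i = 1)
    (hip : 0 < ∑ i : Fin (N - 1), u i * p (embIn N i))
    (E : (Fin (N + 1) → ℝ) → ℝ)
    (hE : ∀ q : Fin (N + 1) → ℝ, E q = ∑ i : Fin (N - 1),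
      φ (q (embIn N i) / (v i * ∑ j : Fin (N - 1), u j * q (embIn N j))) * v i * u i) :
    E ((moranM N s).mulVec p) ≤ E p := by
  have hNr : (0:ℝ) < N := by exact_mod_cast (by omega : 0 < N)
  set S := ∑ j : Fin (N - 1), u j * p (embIn N j) with hSdef
  have hSpos : 0 < S := hip
  set A := moranCore N s with hAdef
  have hAnn : ∀ i j, 0 ≤ A i j := fun i j => moranM_nonneg N hN s hs _ _
  have hrow : ∀ j, ∑ i, u i * A i j = μ1 * u j := by
    intro j
    have h := congrFun huM j
    simpa [Matrix.vecMul, dotProduct] using h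
  have hcol : ∀ i, ∑ j, A i j * v j = μ1 * v i := by
    intro i
    have h := congrFun hMv i
    simpa [Matrix.mulVec, dotProduct] using h
  -- μ1 > 0
  have hNr2 : (2:ℝ) ≤ N := by exact_mod_cast hN
  have hμ : 0 < μ1 := by
    set i0 : Fin (N - 1) := ⟨0, by omega⟩ with hi0
    have hdiag : 0 < A i0 i0 := by
      have hs1 := hs.2.2 1 one_pos (by omega)
      have e0 : A i0 i0 = 1 - (1:ℝ)/N * (1 - s 1) - ((N:ℝ) - 1)/N * s 1 := by
        show moranM N s ⟨(i0:ℕ) + 1, _⟩ ⟨(i0:ℕ) + 1, _⟩ = _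
        unfold moranM
        simp only [Fin.val_mk]
        rw [if_neg (by simp [hi0]), if_neg (by simp [hi0])]
        norm_num [hi0]
      rw [e0]
      have e1 : (1:ℝ)/N * (1 - s 1) ≤ 1 * (1 - s 1) :=
        mul_le_mul_of_nonneg_right (by rw [div_le_one hNr]; linarith) (by linarith [hs1.2])
      have e2 : ((N:ℝ) - 1)/N * s 1 < 1 * s 1 :=
        mul_lt_mul_of_pos_right (by rw [div_lt_one hNr]; linarith) hs1.1
      linarith
    have hsum : A i0 i0 * v i0 ≤ ∑ j, A i0 j * v j :=
      Finset.single_le_sum (f := fun j => A i0 j * v j)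
        (fun j _ => mul_nonneg (hAnn i0 j) (hv j).le) (Finset.mem_univ i0)
    rw [hcol i0] at hsum
    nlinarith [hv i0, mul_pos hdiag (hv i0)]
  -- the Moran dynamics restricted to the core
  have hcore : ∀ i : Fin (N - 1), (moranM N s).mulVec p (embIn N i)
      = ∑ j : Fin (N - 1), A i j * p (embIn N j) := by
    intro i
    have hi := i.isLt
    show ∑ j, moranM N s (embIn N i) j * p j = _
    rw [sum_core N hN (fun j => moranM N s (embIn N i) j * p j) ?_ ?_]
    · rfl
    · have hz : moranM N s (embIn N i) ⟨0, by omega⟩ = 0 := by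
        show moranM N s ⟨(i:ℕ) + 1, _⟩ ⟨0, _⟩ = 0
        unfold moranM
        simp only [Fin.val_mk]
        rw [if_neg (by omega)]
        by_cases hc : (i:ℕ) + 1 = 0 + 1
        · rw [if_pos (by simpa using hc)]
          simp [hs.1]
        · rw [if_neg (by simpa using hc), if_neg (by omega)]
      show moranM N s (embIn N i) ⟨0, by omega⟩ * p ⟨0, by omega⟩ = 0
      rw [hz, zero_mul]
    · have hz : moranM N s (embIn N i) ⟨N, by omega⟩ = 0 := by
        show moranM N s ⟨(i:ℕ) + 1, _⟩ ⟨N, _⟩ = 0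
        unfold moranM
        simp only [Fin.val_mk]
        by_cases hc : (i:ℕ) + 1 + 1 = N
        · rw [if_pos (by simpa using hc)]
          simp [hs.2.1]
        · rw [if_neg (by simpa using hc), if_neg (by omega), if_neg (by omega)]
      show moranM N s (embIn N i) ⟨N, by omega⟩ * p ⟨N, by omega⟩ = 0
      rw [hz, zero_mul]
  -- the inner product with u scales by μ1
  have hS' : ∑ j : Fin (N - 1), u j * (moranM N s).mulVec p (embIn N j) = μ1 * S := by
    calc ∑ j : Fin (N - 1), u j * (moranM N s).mulVec p (embIn N j)
        = ∑ j, ∑ k, u j * (A j k * p (embIn N k)) := by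
          refine Finset.sum_congr rfl fun j _ => ?_
          rw [hcore j, Finset.mul_sum]
      _ = ∑ k, (∑ j, u j * A j k) * p (embIn N k) := by
          rw [Finset.sum_comm]
          refine Finset.sum_congr rfl fun k _ => ?_
          rw [Finset.sum_mul]
          refine Finset.sum_congr rfl fun j _ => by ring
      _ = ∑ k, (μ1 * u k) * p (embIn N k) := by simp_rw [hrow]
      _ = μ1 * S := by rw [hSdef, Finset.mul_sum]; exact Finset.sum_congr rfl fun k _ => by ring
  -- Jensen per row
  have hkey : ∀ i : Fin (N - 1),
      φ ((moranM N s).mulVec p (embIn N i) / (v i * (μ1 * S)))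
        ≤ ∑ j, (A i j * v j / (μ1 * v i)) * φ (p (embIn N j) / (v j * S)) := by
    intro i
    have hw0 : ∀ j ∈ Finset.univ, 0 ≤ A i j * v j / (μ1 * v i) := fun j _ =>
      div_nonneg (mul_nonneg (hAnn i j) (hv j).le) (mul_pos hμ (hv i)).le
    have hw1 : ∑ j, A i j * v j / (μ1 * v i) = 1 := by
      rw [← Finset.sum_div, hcol i]
      exact div_self (mul_pos hμ (hv i)).ne'
    have hmem : ∀ j ∈ Finset.univ, p (embIn N j) / (v j * S) ∈ Set.Ici (0:ℝ) := fun j _ =>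
      div_nonneg (hp _) (mul_pos (hv j) hSpos).le
    have harg : (moranM N s).mulVec p (embIn N i) / (v i * (μ1 * S))
        = ∑ j, (A i j * v j / (μ1 * v i)) • (p (embIn N j) / (v j * S)) := by
      rw [hcore i, Finset.sum_div]
      refine Finset.sum_congr rfl fun j _ => ?_
      rw [smul_eq_mul]
      field_simp [(hv i).ne', (hv j).ne', hμ.ne', hSpos.ne']
    rw [harg]
    refine le_trans (hφ.map_sum_le hw0 hw1 hmem) ?_
    simp only [smul_eq_mul]
    exact le_refl _
  -- assemble
  rw [hE, hE]
  have hEMp : ∀ i : Fin (N - 1),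
      φ ((moranM N s).mulVec p (embIn N i)
          / (v i * ∑ j, u j * (moranM N s).mulVec p (embIn N j))) * v i * u i
        = φ ((moranM N s).mulVec p (embIn N i) / (v i * (μ1 * S))) * v i * u i := by
    intro i; rw [hS']
  calc ∑ i : Fin (N - 1), φ ((moranM N s).mulVec p (embIn N i)
          / (v i * ∑ j, u j * (moranM N s).mulVec p (embIn N j))) * v i * u i
      = ∑ i : Fin (N - 1),
          φ ((moranM N s).mulVec p (embIn N i) / (v i * (μ1 * S))) * v i * u i := by
        exact Finset.sum_congr rfl fun i _ => hEMp i
    _ ≤ ∑ i : Fin (N - 1),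
          (∑ j, (A i j * v j / (μ1 * v i)) * φ (p (embIn N j) / (v j * S))) * v i * u i := by
        refine Finset.sum_le_sum fun i _ => ?_
        have h1 := hkey i
        have h2 : (0:ℝ) ≤ v i * u i := mul_nonneg (hv i).le (hu i).le
        calc φ ((moranM N s).mulVec p (embIn N i) / (v i * (μ1 * S))) * v i * u i
            = φ ((moranM N s).mulVec p (embIn N i) / (v i * (μ1 * S))) * (v i * u i) := by ring
          _ ≤ (∑ j, (A i j * v j / (μ1 * v i)) * φ (p (embIn N j) / (v j * S))) * (v i * u i) :=
              mul_le_mul_of_nonneg_right h1 h2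
          _ = (∑ j, (A i j * v j / (μ1 * v i)) * φ (p (embIn N j) / (v j * S))) * v i * u i := by
              ring
    _ = ∑ j : Fin (N - 1), φ (p (embIn N j) / (v j * S)) * v j * u j := by
        calc ∑ i, (∑ j, (A i j * v j / (μ1 * v i)) * φ (p (embIn N j) / (v j * S))) * v i * u i
            = ∑ i, ∑ j, (u i * A i j) * (v j * φ (p (embIn N j) / (v j * S)) / μ1) := by
              refine Finset.sum_congr rfl fun i _ => ?_
              rw [Finset.sum_mul, Finset.sum_mul]
              refine Finset.sum_congr rfl fun j _ => ?_
              field_simp [(hv i).ne', hμ.ne']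
          _ = ∑ j, (∑ i, u i * A i j) * (v j * φ (p (embIn N j) / (v j * S)) / μ1) := by
              rw [Finset.sum_comm]
              refine Finset.sum_congr rfl fun j _ => ?_
              rw [Finset.sum_mul]
          _ = ∑ j, φ (p (embIn N j) / (v j * S)) * v j * u j := by
              refine Finset.sum_congr rfl fun j _ => ?_
              rw [hrow j]
              field_simp [hμ.ne']
end

section
/- Pseudo-additivity of the Tsallis m-entropy under independent loci: let m > 0, m ≠ 1, let K_1, K_2 ≥ 1, let w^{(k)}, z^{(k)} ∈ ℝ^{K_k} be entrywise positive vectors and p^{(k)} ∈ ℝ^{K_k} entrywise nonnegative vectors with ⟨w^{(k)}, p^{(k)}⟩ > 0, k = 1, 2. Define E_m(p; z, w) = (1/(m−1)) ∑_i [ (p_i/(z_i⟨w,p⟩))^m − p_i/(z_i⟨w,p⟩) ] z_i w_i. Let p = p^{(1)} ⊗ p^{(2)}, z = z^{(1)} ⊗ z^{(2)}, w = w^{(1)} ⊗ w^{(2)}. Then E_m(p; z, w) = E_m(p^{(1)}; z^{(1)}, w^{(1)}) + E_m(p^{(2)}; z^{(2)}, w^{(2)}) + (m−1) E_m(p^{(1)};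 z^{(1)}, w^{(1)}) E_m(p^{(2)}; z^{(2)}, w^{(2)}). -/
/-!
With the normalised coordinates `x i = p i / (z i * ⟨w, p⟩)` one has `∑ x i * z i * w i = 1`, so
`E_m(p; z, w) = (M - 1) / (m - 1)` for the moment `M = ∑ x i ^ m * z i * w i`. The normalised
coordinates of a Kronecker product are the products of the normalised coordinates, hence the
moment is multiplicative, and `(M₁ M₂ - 1)/(m - 1)` expands to the pseudo-additive law.
-/

open Finset

/-- The Tsallis m-entropy of `p` relative to the data `z, w` (entropy with
weight function φ_m(x) = (x^m − x)/(m−1); real exponentiation). -/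
noncomputable def ETsallis (m : ℝ) {K : Type} [Fintype K] (p z w : K → ℝ) : ℝ :=
  (1 / (m - 1)) * ∑ i,
    ((p i / (z i * ∑ j, w j * p j)) ^ m - p i / (z i * ∑ j, w j * p j))
      * (z i * w i)

noncomputable def tsallisMoment (m : ℝ) {K : Type} [Fintype K] (p z w : K → ℝ) : ℝ :=
  ∑ i, (p i / (z i * ∑ j, w j * p j)) ^ m * (z i * w i)

section

variable {K K₁ K₂ : Type} [Fintype K] [Fintype K₁] [Fintype K₂]

lemma sum_normalized_mul_eq_one {p z w : K → ℝ} (hz : ∀ i, z i ≠ 0)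
    (hS : ∑ j, w j * p j ≠ 0) :
    ∑ i, p i / (z i * ∑ j, w j * p j) * (z i * w i) = 1 := by
  calc ∑ i, p i / (z i * ∑ j, w j * p j) * (z i * w i)
      = ∑ i, w i * p i / ∑ j, w j * p j :=
        sum_congr rfl fun i _ => by field_simp [hz i]
    _ = 1 := by rw [← sum_div, div_self hS]

lemma ETsallis_eq_tsallisMoment (m : ℝ) {p z w : K → ℝ} (hz : ∀ i, z i ≠ 0)
    (hS : ∑ j, w j * p j ≠ 0) :
    ETsallis m p z w = 1 / (m - 1) * (tsallisMoment m p z w - 1) := by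
  rw [ETsallis, tsallisMoment, ← sum_normalized_mul_eq_one hz hS, ← sum_sub_distrib]
  simp only [sub_mul]

lemma sum_kronecker_mul_kronecker (w₁ p₁ : K₁ → ℝ) (w₂ p₂ : K₂ → ℝ) :
    ∑ ij : K₁ × K₂, w₁ ij.1 * w₂ ij.2 * (p₁ ij.1 * p₂ ij.2)
      = (∑ i, w₁ i * p₁ i) * ∑ j, w₂ j * p₂ j := by
  rw [Fintype.sum_mul_sum, Fintype.sum_prod_type]
  exact sum_congr rfl fun i _ => sum_congr rfl fun j _ => by ring

lemma tsallisMoment_kronecker (m : ℝ) {p₁ z₁ w₁ : K₁ → ℝ} {p₂ z₂ w₂ : K₂ → ℝ}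
    (hz₁ : ∀ i, 0 ≤ z₁ i) (hz₂ : ∀ j, 0 ≤ z₂ j) (hp₁ : ∀ i, 0 ≤ p₁ i) (hp₂ : ∀ j, 0 ≤ p₂ j)
    (hS₁ : 0 ≤ ∑ i, w₁ i * p₁ i) (hS₂ : 0 ≤ ∑ j, w₂ j * p₂ j) :
    tsallisMoment m (fun ij : K₁ × K₂ => p₁ ij.1 * p₂ ij.2) (fun ij => z₁ ij.1 * z₂ ij.2)
        (fun ij => w₁ ij.1 * w₂ ij.2)
      = tsallisMoment m p₁ z₁ w₁ * tsallisMoment m p₂ z₂ w₂ := by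
  rw [tsallisMoment, tsallisMoment, tsallisMoment, sum_kronecker_mul_kronecker,
    Fintype.sum_prod_type]
  conv_rhs => rw [Fintype.sum_mul_sum]
  refine sum_congr rfl fun i _ => sum_congr rfl fun j _ => ?_
  rw [mul_mul_mul_comm (z₁ i), ← div_mul_div_comm,
    Real.mul_rpow (by positivity [hp₁ i, hz₁ i]) (by positivity [hp₂ j, hz₂ j])]
  ring

lemma one_div_sub_one_mul_pseudo_add (m a b : ℝ) :
    1 / (m - 1) * (a * b - 1)
      = 1 / (m - 1) * (a - 1) + 1 / (m - 1) * (b - 1)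
        + (m - 1) * (1 / (m - 1) * (a - 1)) * (1 / (m - 1) * (b - 1)) := by
  -- true at `m = 1` as well, where `1 / (m - 1) = 0`
  have h : (m - 1) * (1 / (m - 1)) * (1 / (m - 1)) = 1 / (m - 1) := by
    simpa [one_div] using inv_mul_mul_self (m - 1)⁻¹
  linear_combination -(a - 1) * (b - 1) * h

end

theorem ETsallis_tensor_pseudo_additive_general (m : ℝ)
    (K1 K2 : ℕ)
    (z1 w1 p1 : Fin K1 → ℝ) (z2 w2 p2 : Fin K2 → ℝ)
    (hz1 : ∀ i, 0 < z1 i)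
    (hz2 : ∀ i, 0 < z2 i)
    (hp1 : ∀ i, 0 ≤ p1 i) (hp2 : ∀ i, 0 ≤ p2 i)
    (hip1 : 0 < ∑ i, w1 i * p1 i) (hip2 : 0 < ∑ i, w2 i * p2 i) :
    ETsallis m (fun ij : Fin K1 × Fin K2 => p1 ij.1 * p2 ij.2)
        (fun ij => z1 ij.1 * z2 ij.2) (fun ij => w1 ij.1 * w2 ij.2)
      = ETsallis m p1 z1 w1 + ETsallis m p2 z2 w2
        + (m - 1) * ETsallis m p1 z1 w1 * ETsallis m p2 z2 w2 := by
  have hz : ∀ ij : Fin K1 × Fin K2, z1 ij.1 * z2 ij.2 ≠ 0 :=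
    fun ij => mul_ne_zero (hz1 ij.1).ne' (hz2 ij.2).ne'
  have hS : ∑ ij : Fin K1 × Fin K2, w1 ij.1 * w2 ij.2 * (p1 ij.1 * p2 ij.2) ≠ 0 := by
    rw [sum_kronecker_mul_kronecker]
    exact mul_ne_zero hip1.ne' hip2.ne'
  rw [ETsallis_eq_tsallisMoment m hz hS,
    ETsallis_eq_tsallisMoment m (fun i => (hz1 i).ne') hip1.ne',
    ETsallis_eq_tsallisMoment m (fun j => (hz2 j).ne') hip2.ne',
    tsallisMoment_kronecker m (fun i => (hz1 i).le) (fun j => (hz2 j).le) hp1 hp2 hip1.le hip2.le]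
  exact one_div_sub_one_mul_pseudo_add m _ _

/-- pseudo-additivity of the Tsallis m-entropy under independent
loci: E_m(p⊗p') = E_m(p) + E_m(p') + (m−1)E_m(p)E_m(p'). -/
theorem ETsallis_tensor_pseudo_additive (m : ℝ) (hm0 : 0 < m) (hm1 : m ≠ 1)
    (K1 K2 : ℕ) (hK1 : 1 ≤ K1) (hK2 : 1 ≤ K2)
    (z1 w1 p1 : Fin K1 → ℝ) (z2 w2 p2 : Fin K2 → ℝ)
    (hz1 : ∀ i, 0 < z1 i) (hw1 : ∀ i, 0 < w1 i)
    (hz2 : ∀ i, 0 < z2 i) (hw2 : ∀ i, 0 < w2 i)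
    (hp1 : ∀ i, 0 ≤ p1 i) (hp2 : ∀ i, 0 ≤ p2 i)
    (hip1 : 0 < ∑ i, w1 i * p1 i) (hip2 : 0 < ∑ i, w2 i * p2 i) :
    ETsallis m (fun ij : Fin K1 × Fin K2 => p1 ij.1 * p2 ij.2)
        (fun ij => z1 ij.1 * z2 ij.2) (fun ij => w1 ij.1 * w2 ij.2)
      = ETsallis m p1 z1 w1 + ETsallis m p2 z2 w2
        + (m - 1) * ETsallis m p1 z1 w1 * ETsallis m p2 z2 w2 :=
  ETsallis_tensor_pseudo_additive_general m K1 K2 z1 w1 p1 z2 w2 p2 hz1 hz2 hp1 hp2 hip1 hip2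
end

section
/- Decay of the Boltzmann–Gibbs–Shannon entropy for the Wright–Fisher process: let N ≥ 2, let s : {0,…,N} → [0,1] with s_0 = 0, s_N = 1 and 0 < s_j < 1 for 0 < j < N, and let M be the Wright–Fisher transition matrix M_{ij} = C(N,i) s_j^i (1−s_j)^{N−i} for i, j ∈ {0,…,N}. Let ũ, ṽ ∈ ℝ^{N−1} be entrywise positive left and right eigenvectors of the core matrix M̃ = (M_{ij})_{1≤i,j≤N−1} for its Perron eigenvalue μ1 > 0, normalized so ∑_i ṽ_i = 1 and ⟨ũ,ṽ⟩ = 1, extended to u, v ∈ ℝ^{N+1} by zeros at indices 0 and N. Then for every probability vector p ∈ Δ^N with ⟨u,p⟩ > 0, the BGS entropy satisfies E_BGS(Mp) ≤ E_BGS(p), with equality if and only if p_i/(v_i⟨u,p⟩) = 1 for all i ∈ {1,…,N−1}. -/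
open Finset Matrix Filter

/-- The (N+1)×(N+1) Wright–Fisher transition matrix (indices 0,…,N) built from
type selection probabilities `s`: M_{ij} = C(N,i) s_j^i (1−s_j)^{N−i}. -/
noncomputable def wrightFisherM (N : ℕ) (s : ℕ → ℝ) :
    Matrix (Fin (N + 1)) (Fin (N + 1)) ℝ :=
  fun i j => (N.choose (i : ℕ) : ℝ) * s (j : ℕ) ^ (i : ℕ)
    * (1 - s (j : ℕ)) ^ (N - (i : ℕ))

/-- The core matrix of the Wright–Fisher process (states 1,…,N−1). -/
noncomputable def wrightFisherCore (N : ℕ) (s : ℕ → ℝ) :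
    Matrix (Fin (N - 1)) (Fin (N - 1)) ℝ :=
  fun i j => wrightFisherM N s (embIn N i) (embIn N j)

/-- Sums over the full index set collapse to sums over interior indices when the
endpoints contribute zero. -/
lemma sum_embIn_aux (N : ℕ) (hN : 2 ≤ N) (g : Fin (N + 1) → ℝ)
    (h0 : g ⟨0, by omega⟩ = 0) (hend : g ⟨N, by omega⟩ = 0) :
    ∑ k, g k = ∑ j : Fin (N - 1), g (embIn N j) := by
  classical
  have hinj : ∀ a ∈ (univ : Finset (Fin (N - 1))), ∀ b ∈ univ,
      embIn N a = embIn N b → a = b := by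
    intro a _ b _ h
    have : (a : ℕ) + 1 = (b : ℕ) + 1 := congrArg Fin.val h
    exact Fin.ext (by omega)
  rw [← Finset.sum_image hinj]
  refine (Finset.sum_subset (Finset.subset_univ _) ?_).symm
  intro k _ hk
  have hkval : (k : ℕ) = 0 ∨ (k : ℕ) = N := by
    by_contra hc
    push_neg at hc
    exact hk (Finset.mem_image.2 ⟨⟨(k : ℕ) - 1, by have := k.isLt; omega⟩,
      Finset.mem_univ _, Fin.ext (by show ((k : ℕ) - 1) + 1 = (k : ℕ); omega)⟩)
  rcases hkval with h | h
  · have : k = ⟨0, by omega⟩ := Fin.ext h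
    rw [this]; exact h0
  · have : k = ⟨N, by omega⟩ := Fin.ext h
    rw [this]; exact hend

/-- decay of the Boltzmann–Gibbs–Shannon entropy for the
Wright–Fisher process: E_BGS(Mp) ≤ E_BGS(p), with equality iff
p_i/(v_i⟨u,p⟩) = 1 for all interior i. -/
theorem wright_fisher_BGS_entropy_decay
    (N : ℕ) (hN : 2 ≤ N) (s : ℕ → ℝ) (hs : IsTypeSelection N s)
    (μ1 : ℝ) (hμ1 : 0 < μ1) (u v : Fin (N - 1) → ℝ)
    (hu : ∀ i, 0 < u i) (hv : ∀ i, 0 < v i)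
    (huM : (wrightFisherCore N s).vecMul u = μ1 • u)
    (hMv : (wrightFisherCore N s).mulVec v = μ1 • v)
    (hvsum : ∑ i, v i = 1) (huv : ∑ i, u i * v i = 1)
    (p : Fin (N + 1) → ℝ) (hp : ∀ i, 0 ≤ p i) (hpsum : ∑ i, p i = 1)
    (hip : 0 < ∑ i : Fin (N - 1), u i * p (embIn N i))
    (E : (Fin (N + 1) → ℝ) → ℝ)
    (hE : ∀ q : Fin (N + 1) → ℝ, E q = ∑ i : Fin (N - 1),
      (q (embIn N i) / (v i * ∑ j : Fin (N - 1), u j * q (embIn N j)))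
        * Real.log (q (embIn N i) / (v i * ∑ j : Fin (N - 1), u j * q (embIn N j)))
        * v i * u i) :
    E ((wrightFisherM N s).mulVec p) ≤ E p ∧
    (E ((wrightFisherM N s).mulVec p) = E p ↔
      ∀ i : Fin (N - 1),
        p (embIn N i) / (v i * ∑ j : Fin (N - 1), u j * p (embIn N j)) = 1) := by
  classical
  obtain ⟨hs0, hsN, hsint⟩ := hs
  set S := ∑ i : Fin (N - 1), u i * p (embIn N i) with hSdef
  set q := (wrightFisherM N s).mulVec p with hqdef
  set A := wrightFisherCore N s with hAdef
  set x : Fin (N - 1) → ℝ := fun j => p (embIn N j) / (v j * S) with hxdef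
  have hvne : ∀ j, v j ≠ 0 := fun j => (hv j).ne'
  have hSne : S ≠ 0 := hip.ne'
  have hμne : μ1 ≠ 0 := hμ1.ne'
  have hApos : ∀ i j, 0 < A i j := by
    intro i j
    have hi := i.isLt; have hj := j.isLt
    have hsj := hsint ((j : ℕ) + 1) (by omega) (by omega)
    have hchoose : 0 < (N.choose ((i : ℕ) + 1) : ℝ) := by
      exact_mod_cast Nat.choose_pos (by omega)
    have hAij : A i j = (N.choose ((i : ℕ) + 1) : ℝ) * s ((j : ℕ) + 1) ^ ((i : ℕ) + 1)
        * (1 - s ((j : ℕ) + 1)) ^ (N - ((i : ℕ) + 1)) := rfl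
    rw [hAij]
    exact mul_pos (mul_pos hchoose (pow_pos hsj.1 _)) (pow_pos (by linarith [hsj.2]) _)
  have hq_core : ∀ i : Fin (N - 1), q (embIn N i) = ∑ j, A i j * p (embIn N j) := by
    intro i
    have h0 : wrightFisherM N s (embIn N i) ⟨0, by omega⟩ * p ⟨0, by omega⟩ = 0 := by
      have hM0 : wrightFisherM N s (embIn N i) ⟨0, by omega⟩ = 0 := by
        show (N.choose ((i : ℕ) + 1) : ℝ) * s 0 ^ ((i : ℕ) + 1)
          * (1 - s 0) ^ (N - ((i : ℕ) + 1)) = 0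
        rw [hs0, zero_pow (Nat.succ_ne_zero _)]; ring
      rw [hM0, zero_mul]
    have hNN : wrightFisherM N s (embIn N i) ⟨N, by omega⟩ * p ⟨N, by omega⟩ = 0 := by
      have hiN : (i : ℕ) + 1 < N := by have := i.isLt; omega
      have hMN : wrightFisherM N s (embIn N i) ⟨N, by omega⟩ = 0 := by
        show (N.choose ((i : ℕ) + 1) : ℝ) * s N ^ ((i : ℕ) + 1)
          * (1 - s N) ^ (N - ((i : ℕ) + 1)) = 0
        rw [hsN]
        rw [show (1 : ℝ) - 1 = 0 from sub_self 1,
          zero_pow (by omega : N - ((i : ℕ) + 1) ≠ 0)]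
        ring
      rw [hMN, zero_mul]
    show (∑ k, wrightFisherM N s (embIn N i) k * p k) = _
    rw [sum_embIn_aux N hN _ h0 hNN]
    rfl
  have hrow : ∀ i, ∑ j, A i j * v j = μ1 * v i := by
    intro i
    have := congrFun hMv i
    simpa [Matrix.mulVec, dotProduct, hAdef] using this
  have hcol : ∀ j, ∑ i, u i * A i j = μ1 * u j := by
    intro j
    have := congrFun huM j
    simpa [Matrix.vecMul, dotProduct, hAdef] using this
  have hSq : ∑ j, u j * q (embIn N j) = μ1 * S := by
    have h1 : ∀ j, u j * q (embIn N j) = ∑ k, u j * A j k * p (embIn N k) := by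
      intro j; rw [hq_core j, Finset.mul_sum]
      exact Finset.sum_congr rfl fun k _ => by ring
    rw [Finset.sum_congr rfl fun j _ => h1 j, Finset.sum_comm]
    have h2 : ∀ k, (∑ j, u j * A j k * p (embIn N k)) = μ1 * (u k * p (embIn N k)) := by
      intro k
      rw [← Finset.sum_mul (f := fun j => u j * A j k), hcol k]; ring
    rw [Finset.sum_congr rfl fun k _ => h2 k, ← Finset.mul_sum, ← hSdef]
  set w : Fin (N - 1) → Fin (N - 1) → ℝ := fun i j => A i j * v j / (μ1 * v i) with hwdef
  have hwpos : ∀ i j, 0 < w i j :=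
    fun i j => div_pos (mul_pos (hApos i j) (hv j)) (mul_pos hμ1 (hv i))
  have hwsum : ∀ i, ∑ j, w i j = 1 := by
    intro i
    simp only [hwdef]
    rw [← Finset.sum_div, hrow i]
    exact div_self (mul_pos hμ1 (hv i)).ne'
  have hy : ∀ i, q (embIn N i) / (v i * (μ1 * S)) = ∑ j, w i j * x j := by
    intro i
    rw [hq_core i, Finset.sum_div]
    refine Finset.sum_congr rfl fun j _ => ?_
    simp only [hwdef, hxdef]
    rw [div_mul_div_comm]
    rw [show μ1 * v i * (v j * S) = v j * (μ1 * (v i * S)) by ring,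
      show A i j * v j * p (embIn N j) = v j * (A i j * p (embIn N j)) by ring,
      mul_div_mul_left _ _ (hvne j)]
    ring_nf
  have hEp : E p = ∑ j, (x j * Real.log (x j)) * (v j * u j) := by
    rw [hE p, ← hSdef]
    exact Finset.sum_congr rfl fun j _ => by simp only [hxdef]; ring
  have hEq : E q = ∑ i, ((∑ j, w i j * x j) * Real.log (∑ j, w i j * x j)) * (v i * u i) := by
    rw [hE q]
    simp only [hSq, hy]
    exact Finset.sum_congr rfl fun i _ => by ring
  have hwcol : ∀ j, ∑ i, w i j * (v i * u i) = v j * u j := by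
    intro j
    have h1 : ∀ i, w i j * (v i * u i) = u i * A i j * (v j / μ1) := by
      intro i; simp only [hwdef]
      rw [← mul_div_assoc, div_mul_eq_mul_div,
        div_eq_div_iff (mul_pos hμ1 (hv i)).ne' hμne]
      ring
    rw [Finset.sum_congr rfl fun i _ => h1 i, ← Finset.sum_mul, hcol j,
      ← mul_div_assoc, div_eq_iff hμne]
    ring
  have hcollapse : ∑ i, (∑ j, w i j * (x j * Real.log (x j))) * (v i * u i)
      = ∑ j, (x j * Real.log (x j)) * (v j * u j) := by
    have h1 : ∀ i, (∑ j, w i j * (x j * Real.log (x j))) * (v i * u i)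
        = ∑ j, (x j * Real.log (x j)) * (w i j * (v i * u i)) := by
      intro i; rw [Finset.sum_mul]
      exact Finset.sum_congr rfl fun j _ => by ring
    rw [Finset.sum_congr rfl fun i _ => h1 i, Finset.sum_comm]
    exact Finset.sum_congr rfl fun j _ => by rw [← Finset.mul_sum, hwcol j]
  have hxmem : ∀ j, x j ∈ Set.Ici (0 : ℝ) :=
    fun j => div_nonneg (hp _) (mul_pos (hv j) hip).le
  have hjen : ∀ i, (∑ j, w i j * x j) * Real.log (∑ j, w i j * x j)
      ≤ ∑ j, w i j * (x j * Real.log (x j)) := by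
    intro i
    simpa only [smul_eq_mul] using
      Real.convexOn_mul_log.map_sum_le (fun j _ => (hwpos i j).le) (hwsum i)
        (fun j _ => hxmem j)
  have hle : E q ≤ E p := by
    rw [hEq, hEp, ← hcollapse]
    exact Finset.sum_le_sum fun i _ =>
      mul_le_mul_of_nonneg_right (hjen i) (mul_pos (hv i) (hu i)).le
  have hxsum : ∑ j, x j * (v j * u j) = 1 := by
    have h1 : ∀ j, x j * (v j * u j) = u j * p (embIn N j) / S := by
      intro j; simp only [hxdef]
      rw [div_mul_eq_mul_div, div_eq_div_iff (mul_pos (hv j) hip).ne' hSne]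
      ring
    rw [Finset.sum_congr rfl fun j _ => h1 j, ← Finset.sum_div, ← hSdef]
    exact div_self hSne
  have hstrict : (∃ j, x j ≠ 1) → E q < E p := by
    rintro ⟨j0, hj0⟩
    have hnc : ∃ a, ∃ b, x a ≠ x b := by
      by_contra hcon
      push_neg at hcon
      have h1 : (1 : ℝ) = x j0 := by
        calc (1 : ℝ) = ∑ j, x j * (v j * u j) := hxsum.symm
          _ = ∑ j, x j0 * (v j * u j) :=
              Finset.sum_congr rfl fun j _ => by rw [hcon j j0]
          _ = x j0 * ∑ j, v j * u j := by rw [Finset.mul_sum]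
          _ = x j0 * ∑ j, u j * v j := by
              rw [Finset.sum_congr rfl fun j _ => mul_comm (v j) (u j)]
          _ = x j0 := by rw [huv, mul_one]
      exact hj0 h1.symm
    obtain ⟨a, b, hab⟩ := hnc
    have hne : Nonempty (Fin (N - 1)) := ⟨⟨0, by omega⟩⟩
    obtain ⟨i0⟩ := hne
    have hstrict_i : (∑ j, w i0 j * x j) * Real.log (∑ j, w i0 j * x j)
        < ∑ j, w i0 j * (x j * Real.log (x j)) := by
      have := Real.strictConvexOn_mul_log.map_sum_lt
        (fun j (_ : j ∈ univ) => hwpos i0 j) (hwsum i0) (fun j _ => hxmem j)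
        ⟨a, Finset.mem_univ a, b, Finset.mem_univ b, hab⟩
      simpa only [smul_eq_mul] using this
    rw [hEq, hEp, ← hcollapse]
    refine Finset.sum_lt_sum (fun i _ =>
      mul_le_mul_of_nonneg_right (hjen i) (mul_pos (hv i) (hu i)).le)
      ⟨i0, Finset.mem_univ i0, ?_⟩
    exact mul_lt_mul_of_pos_right hstrict_i (mul_pos (hv i0) (hu i0))
  refine ⟨hle, ?_, ?_⟩
  · intro heq
    by_contra hcon
    push_neg at hcon
    have hcon' : ∃ j, x j ≠ 1 := by simp only [hxdef]; exact hcon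
    exact (hstrict hcon').ne heq
  · intro hall
    have hx1 : ∀ j, x j = 1 := by
      intro j; simp only [hxdef]; exact hall j
    have hy1 : ∀ i, (∑ j, w i j * x j) = 1 := by
      intro i
      rw [Finset.sum_congr rfl fun j _ => by rw [hx1 j, mul_one], hwsum i]
    rw [hEq, hEp]
    simp only [hy1]
    simp [hx1, Real.log_one]
end

section
/- CP-symmetry of the Moran process: let s : {0,…,N} → [0,1] be a type selection vector (s_0 = 0, s_N = 1) and let M be the associated Moran transition matrix. Define the CP-transformed type selection vector s^c by s^c_i = 1 − s_{N−i}, and let M^c be the Moran transition matrix associated with s^c. Then M^c_{ij} = M_{N−i, N−j} for all i, j ∈ {0,…,N}; consequently, if a sequence of vectors satisfies p_{n+1} = M p_n, then the reversed vectors q_n defined by (q_n)_i = (p_n)_{N−i} satisfy q_{n+1} = M^c q_n. -/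
open Finset Matrix Filter

/-- CP-symmetry of the Moran process: the Moran matrix of the
CP-transformed type selection vector s^c_i = 1 − s_{N−i} satisfies
M^c_{ij} = M_{N−i,N−j}; consequently, if p_{n+1} = M p_n, then the reversed
vectors q_n(i) = p_n(N−i) satisfy q_{n+1} = M^c q_n. -/
theorem moran_CP_symmetry
    (N : ℕ) (hN : 2 ≤ N) (s : ℕ → ℝ) (hs0 : s 0 = 0) (hsN : s N = 1)
    (sc : ℕ → ℝ) (hsc : ∀ i : ℕ, i ≤ N → sc i = 1 - s (N - i)) :
    (∀ i j : Fin (N + 1), moranM N sc i j = moranM N s i.rev j.rev) ∧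
    ∀ pseq : ℕ → (Fin (N + 1) → ℝ),
      (∀ n : ℕ, pseq (n + 1) = (moranM N s).mulVec (pseq n)) →
      ∀ n : ℕ, (fun i : Fin (N + 1) => pseq (n + 1) i.rev)
        = (moranM N sc).mulVec (fun i : Fin (N + 1) => pseq n i.rev) := by
  have hNpos : (0:ℝ) < N := by positivity
  have key : ∀ i j : Fin (N + 1), moranM N sc i j = moranM N s i.rev j.rev := by
    intro i j
    have hi : (i : ℕ) ≤ N := by omega
    have hj : (j : ℕ) ≤ N := by omega
    have hrevi : (i.rev : ℕ) = N - (i : ℕ) := by simp [Fin.val_rev]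
    have hrevj : (j.rev : ℕ) = N - (j : ℕ) := by simp [Fin.val_rev]
    have hscj := hsc (j : ℕ) hj
    have hcast : ((N - (j:ℕ) : ℕ) : ℝ) = (N : ℝ) - ((j:ℕ) : ℝ) := by
      push_cast [Nat.cast_sub hj]; ring
    unfold moranM
    simp only [hrevi, hrevj]
    split_ifs <;> first | omega | (simp only [hscj, hcast]; try ring)
  refine ⟨key, ?_⟩
  intro pseq hrec n
  funext i
  rw [hrec n]
  simp only [Matrix.mulVec, dotProduct, key]
  refine Fintype.sum_equiv ⟨Fin.rev, Fin.rev, Fin.rev_rev, Fin.rev_rev⟩ _ _ ?_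
  intro j
  simp [Fin.rev_rev]
end
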